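/- For every integer j ≥ 1, the linear system Σ_{ℓ=m}^{j} c_ℓ · C(2ℓ+1, ℓ−m) = 0 for m = 0, 1, …, j−1, together with the normalization c_j = 1, has a unique real solution (c_0, c_1, …, c_j); this solution satisfies c_0 ≠ 0; and for every u ∈ C^∞(ℝ) the pointwise identity (∂_x^{2j+1} u)(x) · u(x) = (1/2) Σ_{ℓ=0}^{j} c_ℓ ∂_x^{2ℓ+1}( (∂_x^{j−ℓ} u)² )(x) holds for all x ∈ ℝ. -/

import Mathlib

open Finset Nat
open scoped ContDiff

noncomputable section

namespace HKdVAux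

lemma smooth_iter {u : ℝ → ℝ} (hu : ContDiff ℝ ∞ u) (n : ℕ) :
    ContDiff ℝ ∞ (iteratedDeriv n u) := by
  rw [iteratedDeriv_eq_iterate]; exact hu.iterate_deriv n

lemma iter_iter (u : ℝ → ℝ) (a b : ℕ) :
    iteratedDeriv a (iteratedDeriv b u) = iteratedDeriv (a + b) u := by
  simp only [iteratedDeriv_eq_iterate]
  exact (Function.iterate_add_apply _ a b u).symm

lemma diff_iter {u : ℝ → ℝ} (hu : ContDiff ℝ ∞ u) (n : ℕ) :
    Differentiable ℝ (iteratedDeriv n u) :=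
  (smooth_iter hu n).differentiable (by simp)

lemma leibniz (f g : ℝ → ℝ) (hf : ContDiff ℝ ∞ f) (hg : ContDiff ℝ ∞ g) (n : ℕ) :
    iteratedDeriv n (fun y => f y * g y) =
      fun x => ∑ i ∈ range (n + 1),
        (n.choose i : ℝ) * (iteratedDeriv i f x * iteratedDeriv (n - i) g x) := by
  induction n with
  | zero => simp
  | succ n ih =>
    funext x
    rw [iteratedDeriv_succ, ih]
    have hdiff : ∀ i ∈ range (n + 1), DifferentiableAt ℝ
        (fun x => (n.choose i : ℝ) * (iteratedDeriv i f x * iteratedDeriv (n - i) g x)) x := by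
      intro i _
      exact (((diff_iter hf i x).mul (diff_iter hg (n - i) x)).const_mul _)
    rw [deriv_fun_sum hdiff]
    have hterm : ∀ i ∈ range (n + 1),
        deriv (fun x => (n.choose i : ℝ) * (iteratedDeriv i f x * iteratedDeriv (n - i) g x)) x
        = (n.choose i : ℝ) * (iteratedDeriv (i+1) f x * iteratedDeriv (n - i) g x
            + iteratedDeriv i f x * iteratedDeriv (n - i + 1) g x) := by
      intro i _
      rw [deriv_const_mul _ ((diff_iter hf i x).fun_mul (diff_iter hg (n - i) x)),
        deriv_fun_mul (diff_iter hf i x) (diff_iter hg (n - i) x),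
        ← iteratedDeriv_succ, ← iteratedDeriv_succ]
    rw [Finset.sum_congr rfl hterm]
    have key : ∀ (F G : ℕ → ℝ),
        ∑ i ∈ range (n + 2), ((n+1).choose i : ℝ) * (F i * G (n + 1 - i))
        = ∑ i ∈ range (n + 1), (n.choose i : ℝ) * (F (i+1) * G (n - i) + F i * G (n - i + 1)) := by
      intro F G
      have e1 : ∀ i ∈ range (n+1), (n.choose i : ℝ) * (F (i+1) * G (n-i) + F i * G (n-i+1))
          = (n.choose i : ℝ) * (F (i+1) * G (n-i)) + (n.choose i : ℝ) * (F i * G (n+1-i)) := by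
        intro i hi
        rw [mem_range] at hi
        rw [show n - i + 1 = n + 1 - i by omega]
        ring
      rw [Finset.sum_congr rfl e1, Finset.sum_add_distrib]
      rw [Finset.sum_range_succ (fun i => ((n+1).choose i : ℝ) * (F i * G (n+1-i))) (n+1)]
      rw [Finset.sum_range_succ' (fun i => ((n+1).choose i : ℝ) * (F i * G (n+1-i))) n]
      rw [Finset.sum_range_succ (fun i => (n.choose i : ℝ) * (F (i+1) * G (n-i))) n]
      rw [Finset.sum_range_succ' (fun i => (n.choose i : ℝ) * (F i * G (n+1-i))) n]
      have e2 : ∀ i ∈ range n, ((n+1).choose (i+1) : ℝ) * (F (i+1) * G (n+1-(i+1)))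
          = (n.choose i : ℝ) * (F (i+1) * G (n-i))
            + (n.choose (i+1) : ℝ) * (F (i+1) * G (n+1-(i+1))) := by
        intro i hi
        rw [Nat.choose_succ_succ, Nat.succ_sub_succ]
        push_cast
        ring
      rw [Finset.sum_congr rfl e2, Finset.sum_add_distrib]
      simp [Nat.succ_sub_succ]
      ring
    exact (key (fun i => iteratedDeriv i f x) (fun i => iteratedDeriv i g x)).symm

lemma psum (j m : ℕ) (hm : m < j) : ∀ K b : ℕ, j = m + K + b →
    ∑ i ∈ range (K+1), ((-1:ℝ))^(j-(m+i)) * (2*j+1) * (j+(m+i))! /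
        ((j-(m+i))! * (2*(m+i)+1)!) * ((2*(m+i)+1).choose i)
    = (-1:ℝ)^b * (2*j+1) * b * (j+m+K+1)! /
        ((K+b) * (j+m+1) * (b ! : ℝ) * (K ! : ℝ) * ((2*m+K+1)! : ℝ)) := by
  intro K
  induction K with
  | zero =>
    intro b hb
    have hb0 : b ≠ 0 := by omega
    have e1 : j - m = b := by omega
    rw [Finset.sum_range_one]
    simp only [Nat.add_zero, Nat.choose_zero_right, Nat.cast_one, mul_one, e1]
    rw [show (j + m + 1)! = (j+m+1) * (j+m)! from Nat.factorial_succ _]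
    have h1 : ((b:ℝ)) ≠ 0 := Nat.cast_ne_zero.mpr hb0
    have h2 : ((b ! : ℕ) : ℝ) ≠ 0 := Nat.cast_ne_zero.mpr (Nat.factorial_ne_zero b)
    have h3 : (((2*m+1)! : ℕ) : ℝ) ≠ 0 := Nat.cast_ne_zero.mpr (Nat.factorial_ne_zero _)
    have h4 : ((j:ℝ) + m + 1) ≠ 0 := by positivity
    push_cast
    field_simp
    ring
  | succ K ih =>
    intro b hb
    rw [Finset.sum_range_succ, ih (b+1) (by omega)]
    have e1 : j - (m + (K+1)) = b := by omega
    rw [Nat.cast_choose ℝ (show K+1 ≤ 2*(m+(K+1))+1 by omega)]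
    rw [show 2*(m+(K+1))+1 - (K+1) = 2*m+K+2 from by omega]
    rw [e1]
    rw [show j+(m+(K+1)) = j+m+K+1 from by omega]
    rw [show (j+m+(K+1)+1)! = (j+m+K+2) * (j+m+K+1)! from by
      rw [show j+m+(K+1)+1 = (j+m+K+1)+1 from by omega, Nat.factorial_succ]]
    rw [show ((2*m+(K+1)+1)! : ℕ) = (2*m+K+2) * (2*m+K+1)! from by
      rw [show 2*m+(K+1)+1 = (2*m+K+1)+1 from by omega, Nat.factorial_succ]]
    rw [show ((2*m+K+2)! : ℕ) = (2*m+K+2) * (2*m+K+1)! from Nat.factorial_succ _]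
    rw [show ((K+1)! : ℕ) = (K+1) * K ! from Nat.factorial_succ _]
    rw [show ((b+1)! : ℕ) = (b+1) * b ! from Nat.factorial_succ _]
    have hj : (j:ℝ) = m + K + 1 + b := by
      rw [hb]; push_cast; ring
    have h2 : ((b ! : ℕ) : ℝ) ≠ 0 := Nat.cast_ne_zero.mpr (Nat.factorial_ne_zero b)
    have h3 : ((K ! : ℕ) : ℝ) ≠ 0 := Nat.cast_ne_zero.mpr (Nat.factorial_ne_zero _)
    have h4 : (((2*m+K+1)! : ℕ) : ℝ) ≠ 0 := Nat.cast_ne_zero.mpr (Nat.factorial_ne_zero _)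
    have h5 : (((2*(m+(K+1))+1)! : ℕ) : ℝ) ≠ 0 := Nat.cast_ne_zero.mpr (Nat.factorial_ne_zero _)
    have h6 : (((j+m+K+1)! : ℕ) : ℝ) ≠ 0 := Nat.cast_ne_zero.mpr (Nat.factorial_ne_zero _)
    push_cast
    rw [hj]
    have h7 : (m:ℝ) + K + 1 + b + m + 1 ≠ 0 := by positivity
    have h8 : (K:ℝ) + b + 1 ≠ 0 := by positivity
    field_simp
    ring

/-- the closed-form solution -/
def csol (j : ℕ) : ℕ → ℝ := fun ℓ =>
  if ℓ ≤ j then ((-1:ℝ))^(j-ℓ) * (2*j+1) * (j+ℓ)! / ((j-ℓ)! * (2*ℓ+1)!) else 0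

lemma csol_j (j : ℕ) : csol j j = 1 := by
  rw [csol, if_pos le_rfl, Nat.sub_self]
  rw [show j + j = 2*j from by omega]
  rw [show ((2*j+1)! : ℕ) = (2*j+1) * (2*j)! from Nat.factorial_succ _]
  have h1 : (((2*j)! : ℕ) : ℝ) ≠ 0 := Nat.cast_ne_zero.mpr (Nat.factorial_ne_zero _)
  have h2 : (2*(j:ℝ)+1) ≠ 0 := by positivity
  push_cast
  field_simp
  simp

lemma csol_zero (j : ℕ) : csol j 0 = (-1:ℝ)^j * (2*j+1) := by
  rw [csol, if_pos (Nat.zero_le j)]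
  simp only [Nat.add_zero, Nat.sub_zero, mul_zero, zero_add, Nat.factorial_one]
  have h1 : ((j ! : ℕ) : ℝ) ≠ 0 := Nat.cast_ne_zero.mpr (Nat.factorial_ne_zero _)
  push_cast
  field_simp

lemma csol_sys (j : ℕ) : ∀ m < j,
    ∑ ℓ ∈ Finset.Icc m j, csol j ℓ * (Nat.choose (2 * ℓ + 1) (ℓ - m) : ℝ) = 0 := by
  intro m hm
  rw [← Finset.Ico_add_one_right_eq_Icc, Finset.sum_Ico_eq_sum_range]
  rw [show j + 1 - m = (j - m) + 1 from by omega]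
  have key := psum j m hm (j - m) 0 (by omega)
  have congrs : ∀ i ∈ range ((j-m)+1),
      csol j (m+i) * (Nat.choose (2 * (m+i) + 1) ((m+i) - m) : ℝ)
      = ((-1:ℝ))^(j-(m+i)) * (2*j+1) * (j+(m+i))! /
        ((j-(m+i))! * (2*(m+i)+1)!) * ((2*(m+i)+1).choose i) := by
    intro i hi
    rw [mem_range] at hi
    rw [csol, if_pos (show m+i ≤ j from by omega), show m+i-m = i from by omega]
  rw [Finset.sum_congr rfl congrs, key]
  simp

/-- any solution satisfies the back-substitution formula -/
lemma solve_step (j : ℕ) (d : ℕ → ℝ)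
    (hd : ∀ m < j, ∑ ℓ ∈ Finset.Icc m j, d ℓ * (Nat.choose (2 * ℓ + 1) (ℓ - m) : ℝ) = 0)
    (m : ℕ) (hm : m < j) :
    d m = -∑ ℓ ∈ Finset.Ioc m j, d ℓ * (Nat.choose (2 * ℓ + 1) (ℓ - m) : ℝ) := by
  have h := hd m hm
  rw [← Finset.Ioc_insert_left (le_of_lt hm), Finset.sum_insert (by simp)] at h
  rw [Nat.sub_self] at h
  simp only [Nat.choose_zero_right, Nat.cast_one, mul_one] at h
  linarith

lemma uniq (j : ℕ) (c₁ c₂ : ℕ → ℝ)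
    (h₁ : ∀ m < j, ∑ ℓ ∈ Finset.Icc m j, c₁ ℓ * (Nat.choose (2 * ℓ + 1) (ℓ - m) : ℝ) = 0)
    (e₁ : c₁ j = 1)
    (h₂ : ∀ m < j, ∑ ℓ ∈ Finset.Icc m j, c₂ ℓ * (Nat.choose (2 * ℓ + 1) (ℓ - m) : ℝ) = 0)
    (e₂ : c₂ j = 1) : ∀ ℓ ≤ j, c₁ ℓ = c₂ ℓ := by
  have key : ∀ k : ℕ, ∀ ℓ, ℓ ≤ j → j - ℓ = k → c₁ ℓ = c₂ ℓ := by
    intro k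
    induction k using Nat.strong_induction_on with
    | _ k ih =>
      intro ℓ hℓ hk
      rcases eq_or_lt_of_le hℓ with rfl | hlt
      · rw [e₁, e₂]
      · rw [solve_step j c₁ h₁ ℓ hlt, solve_step j c₂ h₂ ℓ hlt]
        congr 1
        apply Finset.sum_congr rfl
        intro i hi
        rw [Finset.mem_Ioc] at hi
        rw [ih (j - i) (by omega) i hi.2 rfl]
  intro ℓ hℓ
  exact key (j - ℓ) ℓ hℓ rfl
lemma inner_sum (j : ℕ) (u : ℝ → ℝ) (hu : ContDiff ℝ ∞ u) (x : ℝ)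
    (ℓ : ℕ) (hℓ : ℓ ≤ j) :
    iteratedDeriv (2 * ℓ + 1) (fun y => (iteratedDeriv (j - ℓ) u y) ^ 2) x
    = ∑ m ∈ range (ℓ + 1), 2 * ((2*ℓ+1).choose (ℓ - m) : ℝ) *
        (iteratedDeriv (j - m) u x * iteratedDeriv (j + m + 1) u x) := by
  have hv : ContDiff ℝ ∞ (iteratedDeriv (j - ℓ) u) := smooth_iter hu (j - ℓ)
  have h2 : (fun y => (iteratedDeriv (j - ℓ) u y) ^ 2)
      = fun y => iteratedDeriv (j - ℓ) u y * iteratedDeriv (j - ℓ) u y := by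
    funext y; ring
  rw [h2, leibniz _ _ hv hv (2 * ℓ + 1)]
  simp only [iter_iter]
  rw [show 2 * ℓ + 1 + 1 = (ℓ + 1) + (ℓ + 1) from by omega]
  rw [Finset.sum_range_add (fun i => ((2*ℓ+1).choose i : ℝ) *
      (iteratedDeriv (i + (j - ℓ)) u x * iteratedDeriv (2*ℓ+1 - i + (j - ℓ)) u x)) (ℓ+1) (ℓ+1)]
  rw [← Finset.sum_range_reflect (fun i => ((2*ℓ+1).choose i : ℝ) *
      (iteratedDeriv (i + (j - ℓ)) u x * iteratedDeriv (2*ℓ+1 - i + (j - ℓ)) u x)) (ℓ+1)]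
  rw [← Finset.sum_add_distrib]
  apply Finset.sum_congr rfl
  intro m hm
  rw [mem_range] at hm
  rw [show ℓ + 1 - 1 - m = ℓ - m from by omega]
  rw [show ℓ - m + (j - ℓ) = j - m from by omega]
  rw [show 2*ℓ+1 - (ℓ - m) + (j - ℓ) = j + m + 1 from by omega]
  rw [show ℓ + 1 + m + (j - ℓ) = j + m + 1 from by omega]
  rw [show 2*ℓ+1 - (ℓ + 1 + m) + (j - ℓ) = j - m from by omega]
  rw [show ((2*ℓ+1).choose (ℓ+1+m) : ℝ) = ((2*ℓ+1).choose (ℓ - m) : ℝ) from by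
    rw [show ℓ - m = 2*ℓ+1 - (ℓ+1+m) from by omega, Nat.choose_symm (by omega)]]
  ring

lemma identity (j : ℕ) (c : ℕ → ℝ)
    (hsys : ∀ m < j, ∑ ℓ ∈ Finset.Icc m j, c ℓ * (Nat.choose (2 * ℓ + 1) (ℓ - m) : ℝ) = 0)
    (hcj : c j = 1) (u : ℝ → ℝ) (hu : ContDiff ℝ ∞ u) (x : ℝ) :
    iteratedDeriv (2 * j + 1) u x * u x =
      (1 / 2) * ∑ ℓ ∈ Finset.range (j + 1),
        c ℓ * iteratedDeriv (2 * ℓ + 1) (fun y => (iteratedDeriv (j - ℓ) u y) ^ 2) x := by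
  have step1 : ∀ ℓ ∈ range (j+1),
      c ℓ * iteratedDeriv (2 * ℓ + 1) (fun y => (iteratedDeriv (j - ℓ) u y) ^ 2) x
      = ∑ m ∈ range (ℓ + 1), c ℓ * ((2*ℓ+1).choose (ℓ - m) : ℝ) *
          (2 * (iteratedDeriv (j - m) u x * iteratedDeriv (j + m + 1) u x)) := by
    intro ℓ hℓ
    rw [mem_range] at hℓ
    rw [inner_sum j u hu x ℓ (by omega), Finset.mul_sum]
    apply Finset.sum_congr rfl
    intro m _
    ring
  rw [Finset.sum_congr rfl step1]
  rw [Finset.sum_comm' (s := range (j+1)) (t := fun ℓ => range (ℓ+1))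
      (t' := range (j+1)) (s' := fun m => Finset.Icc m j)
      (by intro ℓ m; simp only [mem_range, Finset.mem_Icc]; omega)]
  have step2 : ∀ m ∈ range (j+1),
      ∑ ℓ ∈ Finset.Icc m j, c ℓ * ((2*ℓ+1).choose (ℓ - m) : ℝ) *
          (2 * (iteratedDeriv (j - m) u x * iteratedDeriv (j + m + 1) u x))
      = (∑ ℓ ∈ Finset.Icc m j, c ℓ * ((2*ℓ+1).choose (ℓ - m) : ℝ)) *
          (2 * (iteratedDeriv (j - m) u x * iteratedDeriv (j + m + 1) u x)) := by
    intro m _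
    rw [Finset.sum_mul]
  rw [Finset.sum_congr rfl step2]
  rw [Finset.sum_range_succ]
  have step3 : ∀ m ∈ range j,
      (∑ ℓ ∈ Finset.Icc m j, c ℓ * ((2*ℓ+1).choose (ℓ - m) : ℝ)) *
          (2 * (iteratedDeriv (j - m) u x * iteratedDeriv (j + m + 1) u x)) = 0 := by
    intro m hm
    rw [mem_range] at hm
    rw [hsys m hm, zero_mul]
  rw [Finset.sum_eq_zero step3]
  rw [Finset.Icc_self, Finset.sum_singleton, Nat.sub_self,
    hcj, Nat.choose_zero_right, iteratedDeriv_zero,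
    show j + j + 1 = 2 * j + 1 from by omega]
  push_cast
  ring
end HKdVAux

/-- the triangular linear system `Σ_{ℓ=m}^{j} c_ℓ C(2ℓ+1, ℓ−m) = 0`
(`0 ≤ m ≤ j−1`), `c_j = 1`, has a unique solution, which has `c_0 ≠ 0` and realizes the
algebraic identity `(∂^{2j+1}u) u = ½ Σ_{ℓ=0}^{j} c_ℓ ∂^{2ℓ+1}((∂^{j−ℓ}u)²)`. -/
theorem hkdv_algebraic_identity (j : ℕ) (hj : 1 ≤ j) :
    ∃ c : ℕ → ℝ,
      -- `c` solves the system
      ((∀ m < j, ∑ ℓ ∈ Finset.Icc m j, c ℓ * (Nat.choose (2 * ℓ + 1) (ℓ - m) : ℝ) = 0) ∧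
        c j = 1) ∧
      -- uniqueness of the solution
      (∀ c' : ℕ → ℝ,
        ((∀ m < j, ∑ ℓ ∈ Finset.Icc m j, c' ℓ * (Nat.choose (2 * ℓ + 1) (ℓ - m) : ℝ) = 0) ∧
          c' j = 1) → ∀ ℓ ≤ j, c' ℓ = c ℓ) ∧
      -- the leading coefficient is nonzero
      c 0 ≠ 0 ∧
      -- the pointwise identity
      (∀ u : ℝ → ℝ, ContDiff ℝ (⊤ : ℕ∞) u → ∀ x : ℝ,
        iteratedDeriv (2 * j + 1) u x * u x =
          (1 / 2) * ∑ ℓ ∈ Finset.range (j + 1),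
            c ℓ * iteratedDeriv (2 * ℓ + 1) (fun y => (iteratedDeriv (j - ℓ) u y) ^ 2) x) := by
  refine ⟨HKdVAux.csol j, ⟨HKdVAux.csol_sys j, HKdVAux.csol_j j⟩, ?_, ?_, ?_⟩
  · intro c' hc'
    exact HKdVAux.uniq j c' (HKdVAux.csol j) hc'.1 hc'.2 (HKdVAux.csol_sys j)
      (HKdVAux.csol_j j)
  · rw [HKdVAux.csol_zero]
    have h1 : ((-1:ℝ))^j ≠ 0 := pow_ne_zero _ (by norm_num)
    have h2 : (2*(j:ℝ)+1) ≠ 0 := by positivity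
    exact mul_ne_zero h1 h2
  · intro u hu x
    exact HKdVAux.identity j (HKdVAux.csol j) (HKdVAux.csol_sys j) (HKdVAux.csol_j j)
      u (hu.of_le (by simp)) x

end
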